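/- Let T be a tree, and suppose vertex v performs an improving swap of edge vu to vw (decreasing its eccentricity), producing tree T'. Let A be the component of T minus edge vu containing v. Then every vertex x in A has strictly smaller eccentricity in T' than in T. -/

import Mathlib

/-!
Let `A` be the side of `v` in `T − vu`. Since `T` and `T'` are trees that both contain `T − vu`,
distances between vertices of `A` are the same in `T` and in `T'`. Hence the improvement at `v`
forces `ecc_T(v)` to be attained at a vertex `y` outside `A`. For `x ∈ A` every `T`-walk from `x`
to `y` crosses the edge `vu`, so passes through `v`, and therefore
`ecc_T(x) ≥ d(x, v) + ecc_T(v) > d(x, v) + ecc_T'(v) ≥ ecc_T'(x)`.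
-/

namespace NCG
open SimpleGraph

variable {V : Type*}

/-- Eccentricity of a vertex: maximum graph distance to any other vertex. -/
noncomputable def ecc [Fintype V] (G : SimpleGraph V) (x : V) : ℕ :=
  Finset.univ.sup fun y => G.dist x y

/-- Diameter: maximum eccentricity. -/
noncomputable def diam [Fintype V] (G : SimpleGraph V) : ℕ :=
  Finset.univ.sup fun x => ecc G x

/-- Radius: minimum eccentricity. -/
noncomputable def rad [Fintype V] (G : SimpleGraph V) : ℕ :=
  sInf (Set.range (ecc G))

end NCG

namespace SimpleGraph

variable {V : Type*} {G : SimpleGraph V} {x y z : V}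

lemma IsAcyclic.dist_eq_length_of_isPath (hG : G.IsAcyclic) {p : G.Walk x y} (hp : p.IsPath) :
    G.dist x y = p.length := by
  obtain ⟨q, hq⟩ := p.reachable.exists_walk_length_eq_dist
  have hpq : (⟨p, hp⟩ : G.Path x y) = ⟨q, q.isPath_of_length_eq_dist hq⟩ :=
    (hG.subsingleton_path x y).elim _ _
  rw [← hq, congrArg (fun r : G.Path x y => r.1.length) hpq]

lemma IsAcyclic.dist_eq_of_le_of_reachable {K K' : SimpleGraph V} (hK : K.IsAcyclic)
    (hK' : K'.IsAcyclic) (h : G ≤ K) (h' : G ≤ K') (hxy : G.Reachable x y) :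
    K.dist x y = K'.dist x y := by
  obtain ⟨p, hp⟩ := hxy.exists_isPath
  rw [hK.dist_eq_length_of_isPath (hp.mapLe h), hK'.dist_eq_length_of_isPath (hp.mapLe h'),
    Walk.length_mapLe, Walk.length_mapLe]

lemma dist_eq_add_of_forall_mem_support (hxy : G.Reachable x y)
    (h : ∀ p : G.Walk x y, z ∈ p.support) : G.dist x y = G.dist x z + G.dist z y := by
  classical
  obtain ⟨p, hp⟩ := hxy.exists_walk_length_eq_dist
  have hz := h p
  refine le_antisymm ((p.takeUntil z hz).reachable.dist_triangle_left y) ?_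
  calc G.dist x z + G.dist z y
      ≤ (p.takeUntil z hz).length + (p.dropUntil z hz).length :=
        add_le_add (dist_le _) (dist_le _)
    _ = G.dist x y := by rw [← Walk.length_append, p.take_spec hz, hp]

lemma mem_support_of_reachable_of_not_reachable_deleteEdges {a b : V}
    (hx : (G.deleteEdges {s(a, b)}).Reachable a x)
    (hy : ¬ (G.deleteEdges {s(a, b)}).Reachable a y) (p : G.Walk x y) : a ∈ p.support := by
  have hab : s(a, b) ∈ p.edges := by
    by_contra hab
    exact hy (hx.trans (reachable_deleteEdges_iff_exists_walk.mpr ⟨p, hab⟩))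
  exact p.fst_mem_support_of_mem_edges hab

end SimpleGraph

namespace NCG
open SimpleGraph

variable {V : Type*}

section Eccentricity

variable [Fintype V]

lemma dist_le_ecc (G : SimpleGraph V) (x y : V) : G.dist x y ≤ ecc G x :=
  Finset.le_sup (Finset.mem_univ y)

lemma exists_dist_eq_ecc (G : SimpleGraph V) (x : V) : ∃ y, G.dist x y = ecc G x := by
  obtain ⟨y, -, hy⟩ := Finset.exists_mem_eq_sup Finset.univ ⟨x, Finset.mem_univ x⟩ (G.dist x)
  exact ⟨y, hy.symm⟩

lemma ecc_le_dist_add_ecc {G : SimpleGraph V} (hG : G.Connected) (x y : V) :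
    ecc G x ≤ G.dist x y + ecc G y :=
  Finset.sup_le fun z _ => hG.dist_triangle.trans (add_le_add_right (dist_le_ecc G y z) _)

end Eccentricity

theorem stmt1_general [Fintype V] (T : SimpleGraph V) (hT : T.IsTree)
    (v u w : V)
    (T' : SimpleGraph V) (hT't : T'.IsTree)
    (hT'edges : T'.edgeSet = (T.edgeSet \ {s(v, u)}) ∪ {s(v, w)})
    (himp : ecc T' v < ecc T v) :
    ∀ x : V, (T.deleteEdges {s(v, u)}).Reachable v x → ecc T' x < ecc T x := by
  intro x hx
  set G := T.deleteEdges {s(v, u)}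
  have hGT' : G ≤ T' := by
    rw [← edgeSet_subset_edgeSet, edgeSet_deleteEdges, hT'edges]
    exact Set.subset_union_left
  have hdist {a b : V} (h : G.Reachable a b) : T.dist a b = T'.dist a b :=
    hT.isAcyclic.dist_eq_of_le_of_reachable hT't.isAcyclic (deleteEdges_le _) hGT' h
  obtain ⟨y, hy⟩ := exists_dist_eq_ecc T v
  have hy_far : ¬ G.Reachable v y := fun h => by
    have := dist_le_ecc T' v y
    rw [← hdist h] at this
    omega
  have hxy : T.Reachable x y := hT.connected.preconnected x y
  calc ecc T' x ≤ T'.dist x v + ecc T' v := ecc_le_dist_add_ecc hT't.connected x v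
    _ < T.dist x v + ecc T v := by rw [hdist hx.symm]; omega
    _ = T.dist x y := by
      rw [← hy, dist_eq_add_of_forall_mem_support hxy
        (mem_support_of_reachable_of_not_reachable_deleteEdges hx hy_far)]
    _ ≤ ecc T x := dist_le_ecc T x y

/-- an improving swap strictly decreases the eccentricity of every
vertex in the component A of T − vu containing v. -/
theorem stmt1 [Fintype V] [DecidableEq V] (T : SimpleGraph V) (hT : T.IsTree)
    (v u w : V) (hvu : T.Adj v u)
    (hw : (T.deleteEdges {s(v, u)}).Reachable u w)
    (T' : SimpleGraph V) (hT't : T'.IsTree)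
    (hT'edges : T'.edgeSet = (T.edgeSet \ {s(v, u)}) ∪ {s(v, w)})
    (himp : ecc T' v < ecc T v) :
    ∀ x : V, (T.deleteEdges {s(v, u)}).Reachable v x → ecc T' x < ecc T x :=
  stmt1_general T hT v u w T' hT't hT'edges himp

end NCG
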